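/- Let S be a symmetric positive definite symplectic 2n×2n matrix. Then there exists a symplectic rotation U ∈ U(n) = Sp(n) ∩ O(2n) and a diagonal matrix Δ = diag(λ_1,...,λ_n, 1/λ_1,...,1/λ_n) with 0 < λ_1 ≤ ... ≤ λ_n ≤ 1 such that S = U^T Δ U. -/

import Mathlib

open Matrix

/-- The standard symplectic matrix `J = [[0, I], [-I, 0]]`. -/
noncomputable def stdJ (n : ℕ) : Matrix (Fin n ⊕ Fin n) (Fin n ⊕ Fin n) ℝ :=
  Matrix.fromBlocks 0 1 (-1) 0

/-- A `2n×2n` real matrix is symplectic if `Sᵀ J S = J`. -/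
def IsSymplectic {n : ℕ} (S : Matrix (Fin n ⊕ Fin n) (Fin n ⊕ Fin n) ℝ) : Prop :=
  Sᵀ * stdJ n * S = stdJ n

open Module Finset
open scoped RealInnerProductSpace

set_option linter.unusedSectionVars false

lemma stdJ_mul_stdJ (n : ℕ) : stdJ n * stdJ n = -1 := by
  simp [stdJ, Matrix.fromBlocks_multiply]
  ext (i|i) (j|j) <;> simp [Matrix.fromBlocks, Matrix.one_apply, eq_comm]

lemma stdJ_transpose (n : ℕ) : (stdJ n)ᵀ = -(stdJ n) := by
  ext (i|i) (j|j) <;> simp [stdJ, Matrix.fromBlocks, Matrix.one_apply, eq_comm]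

section helpers
variable {ι : Type} [Fintype ι] [DecidableEq ι]

lemma einner (x y : EuclideanSpace ℝ ι) : ⟪x, y⟫ = ∑ i, x i * y i := by
  simp [PiLp.inner_apply, RCLike.inner_apply, conj_trivial, mul_comm]

lemma eapp (A : Matrix ι ι ℝ) (x : EuclideanSpace ℝ ι) (i : ι) :
    Matrix.toEuclideanLin A x i = ∑ j, A i j * x j := by
  simp [Matrix.toEuclideanLin_apply, Matrix.mulVec, dotProduct]

lemma ecomp (A B : Matrix ι ι ℝ) (x : EuclideanSpace ℝ ι) :
    Matrix.toEuclideanLin A (Matrix.toEuclideanLin B x) = Matrix.toEuclideanLin (A * B) x := by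
  ext i
  simp only [eapp, Matrix.mul_apply, Finset.sum_mul, Finset.mul_sum]
  rw [Finset.sum_comm]
  exact Finset.sum_congr rfl fun a _ => Finset.sum_congr rfl fun b _ => by ring

lemma eadj (A : Matrix ι ι ℝ) (x y : EuclideanSpace ℝ ι) :
    ⟪Matrix.toEuclideanLin A x, y⟫ = ⟪x, Matrix.toEuclideanLin Aᵀ y⟫ := by
  rw [einner, einner]
  simp only [eapp, Matrix.transpose_apply, Finset.sum_mul, Finset.mul_sum]
  rw [Finset.sum_comm]
  exact Finset.sum_congr rfl fun a _ => Finset.sum_congr rfl fun b _ => by ring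

end helpers


lemma rayleigh_lower {E : Type} [NormedAddCommGroup E] [InnerProductSpace ℝ E]
    [FiniteDimensional ℝ E] {N : ℕ} (hN : finrank ℝ E = N) {T : E →ₗ[ℝ] E}
    (hT : T.IsSymmetric) (c : ℝ) (hc : ∀ i, c ≤ hT.eigenvalues hN i) (x : E) :
    c * ⟪x, x⟫ ≤ ⟪x, T x⟫ := by
  set b := hT.eigenvectorBasis hN with hb
  have h1 := b.sum_inner_mul_inner x (T x)
  have h2 := b.sum_inner_mul_inner x x
  rw [← h1, ← h2, Finset.mul_sum]
  apply Finset.sum_le_sum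
  intro k _
  have h3 : ⟪b k, T x⟫ = hT.eigenvalues hN k * ⟪b k, x⟫ := by
    rw [← hT (b k) x, hb, hT.apply_eigenvectorBasis hN k, real_inner_smul_left]
    norm_num
  rw [h3]
  have h4 : ⟪b k, x⟫ = ⟪x, b k⟫ := real_inner_comm _ _
  rw [h4]
  nlinarith [sq_nonneg (⟪x, b k⟫), hc k, sq_nonneg 1]

lemma core_lemma (n : ℕ) : ∀ (E : Type) [NormedAddCommGroup E] [InnerProductSpace ℝ E]
    [FiniteDimensional ℝ E], finrank ℝ E = 2 * n → ∀ (J T : E →ₗ[ℝ] E),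
    (∀ x, J (J x) = -x) →
    (∀ x y, ⟪J x, y⟫ = -⟪x, J y⟫) →
    T.IsSymmetric →
    (∀ x, x ≠ 0 → 0 < ⟪x, T x⟫) →
    (∀ x, T (J (T x)) = J x) →
    ∃ (v : Fin n → E) (lam : Fin n → ℝ),
      (∀ j, 0 < lam j) ∧ Monotone lam ∧ (∀ j, lam j ≤ 1) ∧
      (∀ i j, ⟪v i, v j⟫ = if i = j then 1 else 0) ∧
      (∀ i j, ⟪v i, J (v j)⟫ = 0) ∧
      (∀ j, T (v j) = lam j • v j) := by
  induction n with
  | zero =>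
    intro E _ _ _ hdim J T _ _ _ _ _
    exact ⟨Fin.elim0, Fin.elim0, fun j => j.elim0, by intro i j h; exact i.elim0,
      fun j => j.elim0, fun i => i.elim0, fun i => i.elim0, fun j => j.elim0⟩
  | succ n ih =>
    intro E _ _ _ hdim J T hJ2 hJskew hTsym hTpos hTJ
    have hN : finrank ℝ E = 2 * (n + 1) := hdim
    set μ := hTsym.eigenvalues hN with hμ
    set b := hTsym.eigenvectorBasis hN with hb
    obtain ⟨k₀, -, hmin⟩ := Finset.exists_min_image Finset.univ μ
      ⟨⟨0, by omega⟩, Finset.mem_univ _⟩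
    set lam0 := μ k₀ with hlam0
    set v₀ := b k₀ with hv₀
    have hbon := orthonormal_iff_ite.mp b.orthonormal
    have hv₀inner : ⟪v₀, v₀⟫ = 1 := by
      have h := hbon k₀ k₀; rw [if_pos rfl] at h; exact h
    have hTv₀ : T v₀ = lam0 • v₀ := by
      have := hTsym.apply_eigenvectorBasis hN k₀
      simpa [← hb, ← hμ, ← hv₀] using this
    have hv₀ne : v₀ ≠ 0 := by
      intro h0; rw [h0] at hv₀inner; simp at hv₀inner
    have hlam0pos : 0 < lam0 := by
      have h := hTpos v₀ hv₀ne
      rwa [hTv₀, real_inner_smul_right, hv₀inner, mul_one] at h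
    have hlow : ∀ x, lam0 * ⟪x, x⟫ ≤ ⟪x, T x⟫ :=
      rayleigh_lower hN hTsym lam0 (fun i => hmin i (Finset.mem_univ i))
    have hJv₀self : ⟪J v₀, J v₀⟫ = 1 := by
      rw [hJskew, hJ2, inner_neg_right, hv₀inner]; norm_num
    have hv₀Jv₀ : ⟪v₀, J v₀⟫ = 0 := by
      have h := hJskew v₀ v₀
      have h2 : ⟪J v₀, v₀⟫ = ⟪v₀, J v₀⟫ := real_inner_comm _ _
      linarith
    have hJv₀v₀ : ⟪J v₀, v₀⟫ = 0 := by rw [real_inner_comm]; exact hv₀Jv₀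
    have hTJv₀ : T (J v₀) = lam0⁻¹ • J v₀ := by
      have h := hTJ v₀
      rw [hTv₀, LinearMap.map_smul, LinearMap.map_smul] at h
      calc T (J v₀) = lam0⁻¹ • (lam0 • T (J v₀)) := by
            rw [smul_smul, inv_mul_cancel₀ hlam0pos.ne', one_smul]
        _ = lam0⁻¹ • J v₀ := by rw [h]
    have hlam0le1 : lam0 ≤ 1 := by
      have h1 := hlow (J v₀)
      rw [hTJv₀, real_inner_smul_right, hJv₀self, mul_one, mul_one] at h1
      by_contra hgt
      push_neg at hgt
      have h2 : lam0⁻¹ < 1 := by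
        rw [inv_lt_one_iff₀]; right; exact hgt
      linarith
    -- the orthogonal complement
    set f : Fin 2 → E := ![v₀, J v₀] with hf
    have hn0 : ‖v₀‖ = 1 := by rw [norm_eq_sqrt_real_inner, hv₀inner, Real.sqrt_one]
    have hn1 : ‖J v₀‖ = 1 := by rw [norm_eq_sqrt_real_inner, hJv₀self, Real.sqrt_one]
    have hforth : Orthonormal ℝ f := by
      rw [orthonormal_iff_ite]
      intro i j
      fin_cases i <;> fin_cases j <;>
        simp [hf, hv₀inner, hv₀Jv₀, hJv₀self, hJv₀v₀, hn0, hn1]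
    set K := Submodule.span ℝ (Set.range f) with hK
    have hv₀K : v₀ ∈ K := Submodule.subset_span ⟨0, rfl⟩
    have hJv₀K : J v₀ ∈ K := Submodule.subset_span ⟨1, rfl⟩
    have hKrank : finrank ℝ K = 2 := by
      have := finrank_span_eq_card hforth.linearIndependent
      simpa using this
    have hWrank : finrank ℝ Kᗮ = 2 * n := by
      have := K.finrank_add_finrank_orthogonal
      omega
    have hmemW : ∀ x : E, ⟪v₀, x⟫ = 0 → ⟪J v₀, x⟫ = 0 → x ∈ Kᗮ := by
      intro x h1 h2
      rw [Submodule.mem_orthogonal]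
      intro u hu
      induction hu using Submodule.span_induction with
      | mem u hu =>
        obtain ⟨i, rfl⟩ := hu
        fin_cases i
        · simpa [hf] using h1
        · simpa [hf] using h2
      | zero => simp
      | add u w _ _ hu hw => rw [inner_add_left, hu, hw, add_zero]
      | smul c u _ hu => rw [real_inner_smul_left, hu, mul_zero]
    have hWv₀ : ∀ x ∈ Kᗮ, ⟪v₀, x⟫ = 0 := fun x hx =>
      (Submodule.mem_orthogonal K x).mp hx v₀ hv₀K
    have hWJv₀ : ∀ x ∈ Kᗮ, ⟪J v₀, x⟫ = 0 := fun x hx =>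
      (Submodule.mem_orthogonal K x).mp hx (J v₀) hJv₀K
    have hTW : ∀ x ∈ Kᗮ, T x ∈ Kᗮ := by
      intro x hx
      apply hmemW
      · calc ⟪v₀, T x⟫ = ⟪T v₀, x⟫ := (hTsym v₀ x).symm
          _ = lam0 * ⟪v₀, x⟫ := by rw [hTv₀, real_inner_smul_left]
          _ = 0 := by rw [hWv₀ x hx, mul_zero]
      · calc ⟪J v₀, T x⟫ = ⟪T (J v₀), x⟫ := (hTsym (J v₀) x).symm
          _ = lam0⁻¹ * ⟪J v₀, x⟫ := by rw [hTJv₀, real_inner_smul_left]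
          _ = 0 := by rw [hWJv₀ x hx, mul_zero]
    have hJW : ∀ x ∈ Kᗮ, J x ∈ Kᗮ := by
      intro x hx
      apply hmemW
      · calc ⟪v₀, J x⟫ = ⟪J x, v₀⟫ := real_inner_comm _ _
          _ = -⟪x, J v₀⟫ := hJskew x v₀
          _ = -⟪J v₀, x⟫ := by rw [real_inner_comm]
          _ = 0 := by rw [hWJv₀ x hx, neg_zero]
      · calc ⟪J v₀, J x⟫ = -⟪v₀, J (J x)⟫ := hJskew v₀ (J x)
          _ = -⟪v₀, -x⟫ := by rw [hJ2]
          _ = ⟪v₀, x⟫ := by rw [inner_neg_right, neg_neg]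
          _ = 0 := hWv₀ x hx
    set T' := T.restrict hTW with hT'
    set J' := J.restrict hJW with hJ'
    have hcoeT : ∀ x : Kᗮ, (↑(T' x) : E) = T ↑x := fun x => rfl
    have hcoeJ : ∀ x : Kᗮ, (↑(J' x) : E) = J ↑x := fun x => rfl
    have hJ2' : ∀ x : Kᗮ, J' (J' x) = -x := by
      intro x; apply Subtype.ext
      rw [hcoeJ, hcoeJ, hJ2]; rfl
    have hJskew' : ∀ x y : Kᗮ, ⟪J' x, y⟫ = -⟪x, J' y⟫ := by
      intro x y
      rw [Submodule.coe_inner, Submodule.coe_inner, hcoeJ, hcoeJ]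
      exact hJskew _ _
    have hTsym' : T'.IsSymmetric := by
      intro x y
      rw [Submodule.coe_inner, Submodule.coe_inner, hcoeT, hcoeT]
      exact hTsym _ _
    have hTpos' : ∀ x : Kᗮ, x ≠ 0 → 0 < ⟪x, T' x⟫ := by
      intro x hx
      rw [Submodule.coe_inner, hcoeT]
      exact hTpos _ (by simpa using hx)
    have hTJ' : ∀ x : Kᗮ, T' (J' (T' x)) = J' x := by
      intro x; apply Subtype.ext
      rw [hcoeT, hcoeJ, hcoeT, hcoeJ]
      exact hTJ _
    obtain ⟨v, lam, hpos, hmono, hle1, horth, hvJ, heig⟩ :=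
      ih Kᗮ hWrank J' T' hJ2' hJskew' hTsym' hTpos' hTJ'
    have hvW : ∀ j, (v j : E) ∈ Kᗮ := fun j => (v j).2
    have heigE : ∀ j, T (v j : E) = lam j • (v j : E) := by
      intro j
      have := congrArg (Subtype.val) (heig j)
      simpa [hcoeT] using this
    have horthE : ∀ i j, ⟪(v i : E), (v j : E)⟫ = if i = j then 1 else 0 := by
      intro i j
      have := horth i j
      rwa [Submodule.coe_inner] at this
    have hvJE : ∀ i j, ⟪(v i : E), J (v j : E)⟫ = 0 := by
      intro i j
      have := hvJ i j
      rwa [Submodule.coe_inner, hcoeJ] at this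
    have hlam0le : ∀ j, lam0 ≤ lam j := by
      intro j
      have h1 := hlow (v j : E)
      have h2 : ⟪(v j : E), (v j : E)⟫ = 1 := by simpa using horthE j j
      rw [heigE j, real_inner_smul_right, h2, mul_one, mul_one] at h1
      exact h1
    refine ⟨Fin.cons v₀ (fun j => (v j : E)), Fin.cons lam0 lam, ?_, ?_, ?_, ?_, ?_, ?_⟩
    · intro j
      refine Fin.cases ?_ ?_ j
      · simpa using hlam0pos
      · intro i; simpa using hpos i
    · intro i j hij
      rcases Fin.eq_zero_or_eq_succ i with rfl | ⟨i', rfl⟩ <;>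
        rcases Fin.eq_zero_or_eq_succ j with rfl | ⟨j', rfl⟩
      · simp
      · simpa using hlam0le j'
      · exact absurd (Fin.le_zero_iff.mp hij) (Fin.succ_ne_zero i')
      · simpa using hmono (Fin.succ_le_succ_iff.mp hij)
    · intro j
      refine Fin.cases ?_ ?_ j
      · simpa using hlam0le1
      · intro i; simpa using hle1 i
    · intro i j
      rcases Fin.eq_zero_or_eq_succ i with rfl | ⟨i', rfl⟩ <;>
        rcases Fin.eq_zero_or_eq_succ j with rfl | ⟨j', rfl⟩
      · simpa using hv₀inner
      · simp only [Fin.cons_zero, Fin.cons_succ]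
        rw [if_neg (Fin.succ_ne_zero j').symm]
        exact hWv₀ _ (hvW j')
      · simp only [Fin.cons_zero, Fin.cons_succ]
        rw [if_neg (Fin.succ_ne_zero i')]
        rw [real_inner_comm]
        exact hWv₀ _ (hvW i')
      · simp only [Fin.cons_succ]
        rw [horthE i' j']
        simp [Fin.succ_inj]
    · intro i j
      rcases Fin.eq_zero_or_eq_succ i with rfl | ⟨i', rfl⟩ <;>
        rcases Fin.eq_zero_or_eq_succ j with rfl | ⟨j', rfl⟩
      · simpa using hv₀Jv₀
      · simp only [Fin.cons_zero, Fin.cons_succ]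
        exact hWv₀ _ (hJW _ (hvW j'))
      · simp only [Fin.cons_zero, Fin.cons_succ]
        rw [real_inner_comm]
        exact hWJv₀ _ (hvW i')
      · simp only [Fin.cons_succ]
        exact hvJE i' j'
    · intro j
      refine Fin.cases ?_ ?_ j
      · simpa using hTv₀
      · intro i; simpa using heigE i

/-- every symmetric positive definite symplectic matrix `S` can be
written `S = Uᵀ Δ U` with `U` a symplectic rotation and
`Δ = diag(λ₁,...,λₙ, 1/λ₁,...,1/λₙ)`, `0 < λ₁ ≤ ... ≤ λₙ ≤ 1`. -/
theorem quantum_blobs_stmt2 {n : ℕ}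
    (S : Matrix (Fin n ⊕ Fin n) (Fin n ⊕ Fin n) ℝ)
    (hSsymp : IsSymplectic S) (hS : S.PosDef) (hSsym : Sᵀ = S) :
    ∃ (U : Matrix (Fin n ⊕ Fin n) (Fin n ⊕ Fin n) ℝ) (lam : Fin n → ℝ),
      IsSymplectic U ∧ Uᵀ * U = 1 ∧
      (∀ j, 0 < lam j) ∧ Monotone lam ∧ (∀ j, lam j ≤ 1) ∧
      S = Uᵀ *
        Matrix.fromBlocks (Matrix.diagonal lam) 0 0 (Matrix.diagonal fun j => (lam j)⁻¹) *
        U := by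
  classical
  set T := Matrix.toEuclideanLin S with hT
  set Jop := Matrix.toEuclideanLin (stdJ n) with hJop
  have hdim : finrank ℝ (EuclideanSpace ℝ (Fin n ⊕ Fin n)) = 2 * n := by
    simp [finrank_euclideanSpace]
    omega
  have hSJS : S * stdJ n * S = stdJ n := by
    have h : Sᵀ * stdJ n * S = stdJ n := hSsymp
    rw [hSsym] at h
    exact h
  have hJ2 : ∀ x : (EuclideanSpace ℝ (Fin n ⊕ Fin n)), Jop (Jop x) = -x := by
    intro x
    rw [hJop, ecomp, stdJ_mul_stdJ]
    ext i
    rw [eapp]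
    have hni : (-x) i = -(x i) := rfl
    rw [hni]
    simp [Matrix.neg_apply, Matrix.one_apply, ite_mul]
  have hJskewE : ∀ x y : (EuclideanSpace ℝ (Fin n ⊕ Fin n)), ⟪Jop x, y⟫ = -⟪x, Jop y⟫ := by
    intro x y
    rw [hJop, eadj, stdJ_transpose, map_neg]
    rw [LinearMap.neg_apply, inner_neg_right]
  have hTsymE : T.IsSymmetric := by
    intro x y
    rw [hT, eadj, hSsym]
  have hTposE : ∀ x : (EuclideanSpace ℝ (Fin n ⊕ Fin n)), x ≠ 0 → 0 < ⟪x, T x⟫ := by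
    intro x hx
    have hx' : (fun i => x i) ≠ (0 : (Fin n ⊕ Fin n) → ℝ) := by
      intro h
      apply hx
      ext i
      exact congrFun h i
    have h := hS.dotProduct_mulVec_pos hx'
    simpa [hT, einner, eapp, Matrix.mulVec, dotProduct, Finset.mul_sum] using h
  have hTJE : ∀ x : (EuclideanSpace ℝ (Fin n ⊕ Fin n)), T (Jop (T x)) = Jop x := by
    intro x
    rw [hT, hJop, ecomp, ecomp, hSJS]
  obtain ⟨v, lam, hpos, hmono, hle1, horth, hvJ, heig⟩ :=
    core_lemma n (EuclideanSpace ℝ (Fin n ⊕ Fin n)) hdim Jop T hJ2 hJskewE hTsymE hTposE hTJE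
  have hTJv : ∀ j, T (Jop (v j)) = (lam j)⁻¹ • Jop (v j) := by
    intro j
    have h := hTJE (v j)
    rw [heig j, LinearMap.map_smul, LinearMap.map_smul] at h
    calc T (Jop (v j)) = (lam j)⁻¹ • (lam j • T (Jop (v j))) := by
          rw [smul_smul, inv_mul_cancel₀ (hpos j).ne', one_smul]
      _ = (lam j)⁻¹ • Jop (v j) := by rw [h]
  set r : (Fin n ⊕ Fin n) → (EuclideanSpace ℝ (Fin n ⊕ Fin n)) := Sum.elim v (fun j => -(Jop (v j))) with hr
  set dlt : (Fin n ⊕ Fin n) → ℝ := Sum.elim lam (fun j => (lam j)⁻¹) with hdlt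
  set U : Matrix (Fin n ⊕ Fin n) (Fin n ⊕ Fin n) ℝ := Matrix.of (fun k l => r k l) with hU
  have hrr : ∀ k l, ⟪r k, r l⟫ = if k = l then 1 else 0 := by
    rintro (i | i) (j | j)
    · simpa [hr] using horth i j
    · simp [hr, inner_neg_right, hvJ i j]
    · have h := hJskewE (v i) (v j)
      simp [hr, inner_neg_left, h, hvJ i j]
    · have h := hJskewE (v i) (Jop (v j))
      rw [hJ2 (v j)] at h
      simp only [hr, Sum.elim_inr, inner_neg_left, inner_neg_right]
      rw [h]
      simp [horth i j]
  have hJr : ∀ k l, ⟪r k, Jop (r l)⟫ = stdJ n k l := by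
    rintro (i | i) (j | j)
    · simpa [hr, stdJ, Matrix.fromBlocks] using hvJ i j
    · simp only [hr, Sum.elim_inl, Sum.elim_inr, map_neg, inner_neg_right, hJ2 (v j),
        inner_neg_right, neg_neg]
      rw [horth i j]
      simp [stdJ, Matrix.fromBlocks, Matrix.one_apply]
    · have h := hJskewE (v i) (Jop (v j))
      rw [hJ2 (v j), inner_neg_right, neg_neg] at h
      simp only [hr, Sum.elim_inl, Sum.elim_inr, inner_neg_left]
      rw [h, horth i j]
      simp [stdJ, Matrix.fromBlocks, Matrix.neg_apply, Matrix.one_apply]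
    · have h := hJskewE (v i) (v j)
      simp only [hr, Sum.elim_inr, map_neg, inner_neg_left, inner_neg_right, neg_neg, hJ2 (v j)]
      rw [h, hvJ i j]
      simp [stdJ, Matrix.fromBlocks]
  have hSr : ∀ l, T (r l) = dlt l • r l := by
    rintro (j | j)
    · simpa [hr, hdlt] using heig j
    · simp only [hr, hdlt, Sum.elim_inr, map_neg, hTJv j, smul_neg]
  have key : ∀ (A : Matrix (Fin n ⊕ Fin n) (Fin n ⊕ Fin n) ℝ) k l,
      (U * A * Uᵀ) k l = ⟪r k, Matrix.toEuclideanLin A (r l)⟫ := by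
    intro A k l
    rw [einner]
    simp only [Matrix.mul_apply, Matrix.transpose_apply, hU, Matrix.of_apply, eapp,
      Finset.mul_sum, Finset.sum_mul]
    rw [Finset.sum_comm]
    exact Finset.sum_congr rfl fun a _ => Finset.sum_congr rfl fun b _ => by ring
  have hUU : U * Uᵀ = 1 := by
    ext k l
    have : (U * Uᵀ) k l = ⟪r k, r l⟫ := by
      rw [einner]
      simp only [Matrix.mul_apply, Matrix.transpose_apply, hU, Matrix.of_apply]
    rw [this, hrr, Matrix.one_apply]
  have hUtU : Uᵀ * U = 1 := mul_eq_one_comm.mp hUU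
  have h1 : U * stdJ n * Uᵀ = stdJ n := by
    ext k l
    rw [key, ← hJop, hJr]
  have hsymp : IsSymplectic U := by
    show Uᵀ * stdJ n * U = stdJ n
    calc Uᵀ * stdJ n * U = Uᵀ * (U * stdJ n * Uᵀ) * U := by rw [h1]
      _ = (Uᵀ * U) * stdJ n * (Uᵀ * U) := by noncomm_ring
      _ = stdJ n := by rw [hUtU, one_mul, mul_one]
  have hdelta : U * S * Uᵀ =
      Matrix.fromBlocks (Matrix.diagonal lam) 0 0 (Matrix.diagonal fun j => (lam j)⁻¹) := by
    ext k l
    rw [key, ← hT, hSr l, real_inner_smul_right, hrr]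
    rcases k with i | i <;> rcases l with j | j
    · rcases eq_or_ne i j with rfl | h
      · simp [hdlt, Matrix.fromBlocks, Matrix.diagonal_apply]
      · simp [hdlt, Matrix.fromBlocks, Matrix.diagonal_apply, h]
    · simp [hdlt, Matrix.fromBlocks]
    · simp [hdlt, Matrix.fromBlocks]
    · rcases eq_or_ne i j with rfl | h
      · simp [hdlt, Matrix.fromBlocks, Matrix.diagonal_apply]
      · simp [hdlt, Matrix.fromBlocks, Matrix.diagonal_apply, h]
  refine ⟨U, lam, hsymp, hUtU, hpos, hmono, hle1, ?_⟩
  calc S = (Uᵀ * U) * S * (Uᵀ * U) := by rw [hUtU, one_mul, mul_one]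
    _ = Uᵀ * (U * S * Uᵀ) * U := by noncomm_ring
    _ = Uᵀ * Matrix.fromBlocks (Matrix.diagonal lam) 0 0
          (Matrix.diagonal fun j => (lam j)⁻¹) * U := by rw [hdelta]
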